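/- For every β ∈ B, S_β ∩ W_β = {μ ∈ S_β : β_μ = β}. -/

import Mathlib

open scoped BigOperators
open Matrix

noncomputable section

/-- An element of `V_n`, i.e. a bilinear map ℝⁿ×ℝⁿ→ℝⁿ, encoded by its structure
constants `μ i j k = ⟨μ(e_i,e_j), e_k⟩`. -/
abbrev Vn (n : ℕ) : Type := Fin n → Fin n → Fin n → ℝ

variable {n : ℕ}

/-- skew-symmetry, i.e. membership in `V_n` = Λ²(ℝⁿ)*⊗ℝⁿ. -/
def IsSkew (μ : Vn n) : Prop := ∀ i j k, μ i j k = - μ j i k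

/-- The bilinear map μ : ℝⁿ×ℝⁿ→ℝⁿ associated to the structure constants. -/
def brkt (μ : Vn n) (x y : Fin n → ℝ) : Fin n → ℝ := fun k => ∑ i, ∑ j, x i * y j * μ i j k

/-- The inner product ⟨α,β⟩ = tr(αβᵀ) on n×n matrices. -/
def innM (α β : Matrix (Fin n) (Fin n) ℝ) : ℝ := (α * βᵀ).trace

/-- ‖β‖² for the trace inner product. -/
def normsqM (β : Matrix (Fin n) (Fin n) ℝ) : ℝ := innM β β

/-- ‖β‖ for the trace inner product. -/
def normM (β : Matrix (Fin n) (Fin n) ℝ) : ℝ := Real.sqrt (normsqM β)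

/-- The inner product on V_n: ⟨μ,λ⟩ = Σ_{ijk} μ_{ij}^k λ_{ij}^k. -/
def innV (μ lam : Vn n) : ℝ := ∑ i, ∑ j, ∑ k, μ i j k * lam i j k

/-- The weight α_{ij}^k = E_kk − E_ii − E_jj. -/
def wt (i j k : Fin n) : Matrix (Fin n) (Fin n) ℝ :=
  Matrix.single k k 1 - Matrix.single i i 1 - Matrix.single j j 1

/-- The GL(n,ℝ)-action on V_n: (g.μ)(X,Y) = g μ(g⁻¹X, g⁻¹Y), in structure constants. -/
def act (g : GL (Fin n) ℝ) (μ : Vn n) : Vn n := fun i j k =>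
  ∑ p, ∑ q, ∑ r, (↑g⁻¹ : Matrix (Fin n) (Fin n) ℝ) p i *
    (↑g⁻¹ : Matrix (Fin n) (Fin n) ℝ) q j * (↑g : Matrix (Fin n) (Fin n) ℝ) k r * μ p q r

/-- The infinitesimal action π(α)μ = αμ(·,·) − μ(α·,·) − μ(·,α·), as an endomorphism of V_n. -/
def piEnd (α : Matrix (Fin n) (Fin n) ℝ) : Module.End ℝ (Vn n) where
  toFun μ := fun i j k =>
    (∑ r, α k r * μ i j r) - (∑ p, α p i * μ p j k) - (∑ q, α q j * μ i q k)
  map_add' μ ν := by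
    funext i j k
    simp [mul_add, Finset.sum_add_distrib]
    ring
  map_smul' a μ := by
    funext i j k
    simp only [Pi.smul_apply, smul_eq_mul, RingHom.id_apply, Finset.mul_sum, mul_sub]
    simp [mul_comm, mul_left_comm]


/-- conjugation gαg⁻¹ of a matrix by an element of GL. -/
def mconj (g : GL (Fin n) ℝ) (α : Matrix (Fin n) (Fin n) ℝ) : Matrix (Fin n) (Fin n) ℝ :=
  (↑g : Matrix (Fin n) (Fin n) ℝ) * α * (↑g⁻¹ : Matrix (Fin n) (Fin n) ℝ)

/-- The set D of diagonalizable matrices, D = ∪_{g∈G} g 𝔱 g⁻¹. -/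
def DiagSet : Set (Matrix (Fin n) (Fin n) ℝ) :=
  {α | ∃ g : GL (Fin n) ℝ, ∃ δ : Matrix (Fin n) (Fin n) ℝ, δ.IsDiag ∧
    α = mconj g δ}

/-- m(μ,α): the smallest eigenvalue of π(α) such that the projection of μ onto the
corresponding eigenspace is nonzero (for diagonalizable α, the projection onto the
eigenspace of r is nonzero iff μ is not in the sum of the other eigenspaces). -/
def mFun (μ : Vn n) (α : Matrix (Fin n) (Fin n) ℝ) : ℝ :=
  sInf {r : ℝ | μ ∉ ⨆ (a : ℝ) (_ : a ≠ r), Module.End.eigenspace (piEnd α) a}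

/-- q(α) = tr(α²). -/
def qF (α : Matrix (Fin n) (Fin n) ℝ) : ℝ := (α * α).trace

/-- Q(μ) = inf{q(α) : α ∈ D, m(μ,α) ≥ 1}. -/
def QF (μ : Vn n) : ℝ := sInf {x : ℝ | ∃ α ∈ DiagSet (n := n), 1 ≤ mFun μ α ∧ x = qF α}

/-- Λ(μ) = {β ∈ D : q(β) = Q(μ), m(μ,β) ≥ 1}. -/
def LambdaF (μ : Vn n) : Set (Matrix (Fin n) (Fin n) ℝ) :=
  {β | β ∈ DiagSet (n := n) ∧ qF β = QF μ ∧ 1 ≤ mFun μ β}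

/-- m(μ,α) for diagonal α: min{⟨α,α_ij^k⟩ : μ_ij^k ≠ 0}. -/
def mT (μ : Vn n) (α : Matrix (Fin n) (Fin n) ℝ) : ℝ :=
  sInf {x : ℝ | ∃ i j k, μ i j k ≠ 0 ∧ x = innM α (wt i j k)}

/-- Q_T(μ) = inf{‖α‖² : α ∈ 𝔱, m(μ,α) ≥ 1}. -/
def QT (μ : Vn n) : ℝ :=
  sInf {x : ℝ | ∃ α : Matrix (Fin n) (Fin n) ℝ, α.IsDiag ∧ 1 ≤ mT μ α ∧ x = normsqM α}

/-- Λ_T(μ) = {β ∈ 𝔱 : ‖β‖² = Q_T(μ), m(μ,β) ≥ 1}. -/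
def LambdaT (μ : Vn n) : Set (Matrix (Fin n) (Fin n) ℝ) :=
  {β | β.IsDiag ∧ normsqM β = QT μ ∧ 1 ≤ mT μ β}

/-- The set of weights {α_ij^k : μ_ij^k ≠ 0}. -/
def wtSet (μ : Vn n) : Set (Matrix (Fin n) (Fin n) ℝ) :=
  {w | ∃ i j k, μ i j k ≠ 0 ∧ w = wt i j k}

/-- β_μ: the minimal convex combination of {α_ij^k : μ_ij^k ≠ 0}, i.e. the unique vector of
minimal norm in the convex hull of this set. -/
def betaMu (μ : Vn n) : Matrix (Fin n) (Fin n) ℝ :=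
  Classical.epsilon fun β => β ∈ convexHull ℝ (wtSet μ) ∧
    ∀ γ ∈ convexHull ℝ (wtSet μ), normsqM β ≤ normsqM γ

/-- The stratum S_β = {μ ∈ V_n∖{0} : β is an element of maximal norm in {β_{g.μ} : g ∈ G}}. -/
def SS (β : Matrix (Fin n) (Fin n) ℝ) : Set (Vn n) :=
  {μ | μ ≠ 0 ∧ IsSkew μ ∧ (∃ g : GL (Fin n) ℝ, betaMu (act g μ) = β) ∧
    ∀ g : GL (Fin n) ℝ, normM (betaMu (act g μ)) ≤ normM β}

/-- W_β = {μ ∈ V_n : ⟨β,α_ij^k⟩ ≥ ‖β‖² whenever μ_ij^k ≠ 0}. -/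
def Wset (β : Matrix (Fin n) (Fin n) ℝ) : Set (Vn n) :=
  {μ | IsSkew μ ∧ ∀ i j k, μ i j k ≠ 0 → normsqM β ≤ innM β (wt i j k)}

/-- Z_β = {μ ∈ V_n : ⟨β,α_ij^k⟩ = ‖β‖² whenever μ_ij^k ≠ 0}. -/
def Zset (β : Matrix (Fin n) (Fin n) ℝ) : Set (Vn n) :=
  {μ | IsSkew μ ∧ ∀ i j k, μ i j k ≠ 0 → innM β (wt i j k) = normsqM β}

/-- Y_β = {μ ∈ W_β : ⟨β,α_ij^k⟩ = ‖β‖² for at least one μ_ij^k ≠ 0}. -/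
def Yset (β : Matrix (Fin n) (Fin n) ℝ) : Set (Vn n) :=
  {μ | μ ∈ Wset β ∧ ∃ i j k, μ i j k ≠ 0 ∧ innM β (wt i j k) = normsqM β}

/-- The closed Weyl chamber: diagonal matrices with nondecreasing diagonal entries. -/
def upperT : Set (Matrix (Fin n) (Fin n) ℝ) :=
  {α | α.IsDiag ∧ Monotone fun i => α i i}

/-- B = {β ∈ closure(𝔱⁺) : S_β ≠ ∅}. -/
def Bset : Set (Matrix (Fin n) (Fin n) ℝ) := {β | β ∈ upperT (n := n) ∧ (SS β).Nonempty}

/-- Der(μ) = {α : π(α)μ = 0}. -/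
def Der (μ : Vn n) : Set (Matrix (Fin n) (Fin n) ℝ) := {α | piEnd α μ = 0}

/-- The subgroup of lower triangular invertible matrices. -/
def lowerTriGL : Set (GL (Fin n) ℝ) :=
  {g | ∀ i j : Fin n, i < j → (↑g : Matrix (Fin n) (Fin n) ℝ) i j = 0}

/-- The parabolic subgroup P_α = B₀ G_α attached to α ∈ closure(𝔱⁺). -/
def Pgroup (α : Matrix (Fin n) (Fin n) ℝ) : Set (GL (Fin n) ℝ) :=
  {p | ∃ b ∈ lowerTriGL (n := n), ∃ h : GL (Fin n) ℝ,
    mconj h α = α ∧ p = b * h}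

/-- The parabolic subgroup P_{α'} = g P_α g⁻¹ attached to a diagonalizable matrix
α' = gαg⁻¹, α ∈ closure(𝔱⁺)  (this is independent of the chosen representation). -/
def PgroupD (α' : Matrix (Fin n) (Fin n) ℝ) : Set (GL (Fin n) ℝ) :=
  {p | ∃ g : GL (Fin n) ℝ, ∃ α ∈ upperT (n := n),
    α' = mconj g α ∧ p ∈ (fun h => g * h * g⁻¹) '' Pgroup α}

/-- membership in O(n). -/
def IsOrth (g : GL (Fin n) ℝ) : Prop := (↑g : Matrix (Fin n) (Fin n) ℝ)ᵀ * (↑g : Matrix (Fin n) (Fin n) ℝ) = 1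

/-- The orthogonal projection p_β : W_β → Z_β (in coordinates: it keeps exactly the
coefficients whose weight pairs to ‖β‖² with β). -/
def pproj (β : Matrix (Fin n) (Fin n) ℝ) (μ : Vn n) : Vn n :=
  fun i j k => if innM β (wt i j k) = normsqM β then μ i j k else 0

/-- H_β: the connected subgroup of G whose Lie algebra 𝔥_β is the orthogonal complement
of β inside 𝔤_β = {α : αβ = βα}, realized as the subgroup generated by exponentials. -/
def Hgrp (β : Matrix (Fin n) (Fin n) ℝ) : Subgroup (GL (Fin n) ℝ) :=
  Subgroup.closure {g | ∃ α : Matrix (Fin n) (Fin n) ℝ,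
    α * β = β * α ∧ innM α β = 0 ∧ (↑g : Matrix (Fin n) (Fin n) ℝ) = NormedSpace.exp α}

/-- μ is H_β-semistable if 0 is not in the closure of the orbit H_β.μ. -/
def Semistable (β : Matrix (Fin n) (Fin n) ℝ) (μ : Vn n) : Prop :=
  (0 : Vn n) ∉ closure ((fun g => act g μ) '' ((Hgrp β : Subgroup (GL (Fin n) ℝ)) : Set (GL (Fin n) ℝ)))

/-- The Jacobi identity for the bilinear map attached to μ. -/
def IsJacobi (μ : Vn n) : Prop :=
  ∀ x y z : Fin n → ℝ,
    brkt μ (brkt μ x y) z + brkt μ (brkt μ y z) x + brkt μ (brkt μ z x) y = 0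

/-- Iterated (left-normed) brackets ad x₁ ∘ … ∘ ad x_m (y). -/
def iterBr (μ : Vn n) : List (Fin n → ℝ) → (Fin n → ℝ) → (Fin n → ℝ)
  | [], y => y
  | x :: l, y => brkt μ x (iterBr μ l y)

/-- Nilpotency: some length of iterated brackets vanishes identically. -/
def IsNilp (μ : Vn n) : Prop :=
  ∃ m : ℕ, ∀ l : List (Fin n → ℝ), l.length = m → ∀ y, iterBr μ l y = 0

/-- N: the set of nilpotent Lie brackets in V_n. -/
def Nset : Set (Vn n) := {μ | IsSkew μ ∧ IsJacobi μ ∧ IsNilp μ}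


-- auxiliary
def toE : Matrix (Fin n) (Fin n) ℝ →ₗ[ℝ] EuclideanSpace ℝ (Fin n × Fin n) where
  toFun A := WithLp.toLp 2 (fun p : Fin n × Fin n => A p.1 p.2)
  map_add' _ _ := rfl
  map_smul' _ _ := rfl

lemma toE_inj : Function.Injective (toE (n := n)) := by
  intro A B h
  ext i j
  exact congrArg (fun v : EuclideanSpace ℝ (Fin n × Fin n) => v (i, j)) h

lemma innM_eq (α β : Matrix (Fin n) (Fin n) ℝ) : innM α β = inner ℝ (toE α) (toE β) := by
  simp [innM, toE, Matrix.trace, Matrix.mul_apply, Matrix.diag, PiLp.inner_apply,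
    RCLike.inner_apply, Fintype.sum_prod_type, mul_comm]
  rfl

lemma normsqM_eq (β : Matrix (Fin n) (Fin n) ℝ) : normsqM β = ‖toE β‖ ^ 2 := by
  rw [normsqM, innM_eq, real_inner_self_eq_norm_sq]

lemma normM_eq (β : Matrix (Fin n) (Fin n) ℝ) : normM β = ‖toE β‖ := by
  rw [normM, normsqM_eq, Real.sqrt_sq (norm_nonneg _)]

lemma innM_isLinearMap (β : Matrix (Fin n) (Fin n) ℝ) : IsLinearMap ℝ (innM β) := by
  constructor
  · intro x y; simp [innM, Matrix.transpose_add, Matrix.mul_add]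
  · intro c x; simp [innM, Matrix.transpose_smul, Matrix.mul_smul]

lemma exists_ne_zero {μ : Vn n} (hμ : μ ≠ 0) : ∃ i j k, μ i j k ≠ 0 := by
  by_contra h
  push_neg at h
  exact hμ (by funext i j k; exact h i j k)

lemma continuous_normsqM : Continuous (normsqM (n := n)) := by
  have : (normsqM (n := n)) = fun β => ‖toE β‖ ^ 2 := funext normsqM_eq
  rw [this]
  fun_prop

lemma betaMu_spec {μ : Vn n} (hμ : μ ≠ 0) :
    betaMu μ ∈ convexHull ℝ (wtSet μ) ∧
      ∀ γ ∈ convexHull ℝ (wtSet μ), normsqM (betaMu μ) ≤ normsqM γ := by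
  apply Classical.epsilon_spec (p := fun β => β ∈ convexHull ℝ (wtSet μ) ∧
      ∀ γ ∈ convexHull ℝ (wtSet μ), normsqM β ≤ normsqM γ)
  obtain ⟨i, j, k, h⟩ := exists_ne_zero hμ
  have hne : (convexHull ℝ (wtSet μ)).Nonempty :=
    ⟨wt i j k, subset_convexHull _ _ ⟨i, j, k, h, rfl⟩⟩
  have hfin : (wtSet μ).Finite := by
    apply Set.Finite.subset (Set.finite_range fun x : Fin n × Fin n × Fin n => wt x.1 x.2.1 x.2.2)
    rintro w ⟨i, j, k, -, rfl⟩
    exact ⟨(i, j, k), rfl⟩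
  obtain ⟨β', hC, hmin⟩ := (hfin.isCompact_convexHull ℝ).exists_isMinOn hne
    continuous_normsqM.continuousOn
  exact ⟨β', hC, fun γ hγ => hmin hγ⟩

lemma min_point_inner {E : Type*} [NormedAddCommGroup E] [InnerProductSpace ℝ E]
    [CompleteSpace E] {K : Set E} (hK : Convex ℝ K)
    {v : E} (hv : v ∈ K) (hmin : ∀ w ∈ K, ‖v‖ ≤ ‖w‖)
    {w : E} (hw : w ∈ K) : ‖v‖ ^ 2 ≤ inner ℝ v w := by
  have hinst : Nonempty K := ⟨⟨v, hv⟩⟩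
  have h0 : ‖(0 : E) - v‖ = ⨅ w : K, ‖(0 : E) - w‖ := by
    apply le_antisymm
    · apply le_ciInf
      intro x
      simpa using hmin x x.2
    · have hb : BddBelow (Set.range fun w : K => ‖(0 : E) - w‖) :=
        ⟨0, fun y hy => by obtain ⟨x, rfl⟩ := hy; exact norm_nonneg _⟩
      exact ciInf_le hb ⟨v, hv⟩
  have h := (norm_eq_iInf_iff_real_inner_le_zero hK hv).mp h0 w hw
  have h2 : (0:ℝ) - inner ℝ v w + inner ℝ v v ≤ 0 := by
    simpa [inner_sub_left, inner_sub_right] using h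
  rw [real_inner_self_eq_norm_sq] at h2
  linarith

lemma act_one (μ : Vn n) : act 1 μ = μ := by
  funext i j k
  simp [act, Matrix.one_apply]

/-- **Theorem 2.10 (iv).** S_β ∩ W_β = {μ ∈ S_β : β_μ = β}. -/
theorem SS_inter_W {n : ℕ} (β : Matrix (Fin n) (Fin n) ℝ) (hβ : β ∈ Bset (n := n)) :
    SS β ∩ Wset β = {μ ∈ SS β | betaMu μ = β} := by
  ext μ
  simp only [Set.mem_inter_iff, Set.mem_sep_iff]
  constructor
  · rintro ⟨hS, hW⟩
    refine ⟨hS, ?_⟩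
    obtain ⟨hne, hskew, -, hmax⟩ := hS
    obtain ⟨hmem, -⟩ := betaMu_spec hne
    have hhalf : convexHull ℝ (wtSet μ) ⊆ {γ | normsqM β ≤ innM β γ} := by
      apply convexHull_min ?_ (convex_halfSpace_ge (innM_isLinearMap β) _)
      rintro w ⟨i, j, k, hijk, rfl⟩
      exact hW.2 i j k hijk
    have h1 : normsqM β ≤ innM β (betaMu μ) := hhalf hmem
    have h2 : normM (betaMu μ) ≤ normM β := by
      have := hmax 1
      rwa [act_one] at this
    rw [normM_eq, normM_eq] at h2
    rw [normsqM_eq, innM_eq] at h1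
    set x := toE β
    set y := toE (betaMu μ)
    have hcs : (inner ℝ x y : ℝ) ≤ ‖x‖ * ‖y‖ := real_inner_le_norm x y
    rcases eq_or_lt_of_le (norm_nonneg x) with h0 | h0
    · have hy0 : y = 0 := norm_le_zero_iff.mp (h2.trans h0.symm.le)
      have hx0 : x = 0 := norm_eq_zero.mp h0.symm
      exact toE_inj (hy0.trans hx0.symm)
    · have hxy : ‖x‖ = ‖y‖ := by nlinarith
      have heq : (inner ℝ x y : ℝ) = ‖x‖ * ‖y‖ := by nlinarith
      have := inner_eq_norm_mul_iff_real.mp heq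
      rw [← hxy] at this
      have hxx : x = y := smul_right_injective _ (ne_of_gt h0) this
      exact toE_inj hxx.symm
  · rintro ⟨hS, hbm⟩
    refine ⟨hS, hS.2.1, ?_⟩
    intro i j k hijk
    obtain ⟨hne, -, -, -⟩ := hS
    obtain ⟨hmem, hmin⟩ := betaMu_spec hne
    have hKconv : Convex ℝ (toE '' convexHull ℝ (wtSet μ)) :=
      (convex_convexHull ℝ _).linear_image toE
    have hvmem : toE (betaMu μ) ∈ toE '' convexHull ℝ (wtSet μ) := ⟨_, hmem, rfl⟩
    have hmin' : ∀ w ∈ toE '' convexHull ℝ (wtSet μ), ‖toE (betaMu μ)‖ ≤ ‖w‖ := by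
      rintro w ⟨γ, hγ, rfl⟩
      have := hmin γ hγ
      rw [normsqM_eq, normsqM_eq] at this
      nlinarith [norm_nonneg (toE (betaMu μ)), norm_nonneg (toE γ)]
    have hwmem : toE (wt i j k) ∈ toE '' convexHull ℝ (wtSet μ) :=
      ⟨_, subset_convexHull _ _ ⟨i, j, k, hijk, rfl⟩, rfl⟩
    have key := min_point_inner hKconv hvmem hmin' hwmem
    rw [← normsqM_eq, ← innM_eq, hbm] at key
    exact key


end
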